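/- arXiv:0704.1349 — 4 statements merged into one kernel-verified Lean document; each statement's English description precedes it below -/
import Mathlib

section
/- Let h : ℝ → ℝ be increasing, convex, twice differentiable, with d(h′(s), ℕ) + h″(s) ≥ 1/4 for all s. Then for all compactly supported v ∈ L²(ℝ; D(H)) one has ‖(1+h″)^{1/2} e^{h(s)} v‖_{L²} ≲ ‖e^{h(s)}(∂_s − H)v‖_{L²}, where H is the Hermite operator. Key inequality after substituting w = e^h v: ‖(∂_s − H + h′(s))w‖²_{L²} = ‖∂_s w‖² + ‖(−H+h′)w‖² + ‖(h″)^{1/2} w‖² ≥ ∫ (d(h′(s),ℕ)² + h″(s)) ‖w(s)‖²_{L²} ds. -/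
/-!
With `w = e^h v`, the right-hand side is `∫ ‖w' - (H + h') w‖²`. Expanding the square, the cross
term `-2⟪w', (H + h') w⟫` is minus the derivative of `⟪H w, w⟫ + h' ‖w‖²` plus `h'' ‖w‖²`, so it
integrates to `∫ h'' ‖w‖²` and the right-hand side equals `∫ ‖w'‖² + ‖(H + h') w‖² + h'' ‖w‖²`.
A self-adjoint operator with spectrum in `ℕ` is positive, so `‖(H + h') w‖ ≥ h' ‖w‖`, and since
`d(h', ℕ) ≤ h'` the gap condition gives `1 + h'' ≤ 72 (h'² + h'')` pointwise.
-/

open MeasureTheory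

theorem IsSelfAdjoint.isPositive_of_spectrum_nonneg {E : Type*} [NormedAddCommGroup E]
    [InnerProductSpace ℝ E] [CompleteSpace E] {T : E →L[ℝ] E} (hT : IsSelfAdjoint T)
    (hspec : ∀ r ∈ spectrum ℝ T, 0 ≤ r) : T.IsPositive := by
  refine (T.isPositive_iff').2 ⟨hT, fun x => ?_⟩
  rcases subsingleton_or_nontrivial E with hE | hE
  · simp [Subsingleton.elim x 0]
  set S := algebraMap ℝ (E →L[ℝ] E) ‖T‖ - T
  have hS : IsSelfAdjoint S := (IsSelfAdjoint.all _).algebraMap _ |>.sub hT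
  -- `σ S = ‖T‖ - σ T ⊆ [0, ‖T‖]`, so the spectral radius `‖S‖` of `S` is at most `‖T‖`
  have hS_norm : ‖S‖ ≤ ‖T‖ := by
    have hrad : spectralRadius ℝ S ≤ ‖T‖₊ := by
      refine iSup₂_le fun k hk => ?_
      rw [← spectrum.singleton_sub_eq] at hk
      obtain ⟨_, rfl, μ, hμ, rfl⟩ := hk
      have hμT := spectrum.norm_le_norm_of_mem hμ
      have hμ0 := hspec μ hμ
      rw [Real.norm_of_nonneg hμ0] at hμT
      rw [ENNReal.coe_le_coe, ← NNReal.coe_le_coe, coe_nnnorm, coe_nnnorm, Real.norm_eq_abs,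
        abs_le]
      constructor <;> linarith
    rwa [S.spectralRadius_eq_nnnorm hS, ENNReal.coe_le_coe, ← NNReal.coe_le_coe, coe_nnnorm,
      coe_nnnorm] at hrad
  have hSx : inner ℝ (S x) x = ‖T‖ * ‖x‖ ^ 2 - inner ℝ (T x) x := by
    simp [S, inner_sub_left, Algebra.algebraMap_eq_smul_one, real_inner_smul_left]
  nlinarith [real_inner_le_norm (S x) x, S.le_opNorm x, norm_nonneg x]

theorem ContinuousLinearMap.IsPositive.mul_norm_le_norm_add_smul {E : Type*} [NormedAddCommGroup E]
    [InnerProductSpace ℝ E] {T : E →L[ℝ] E} (hT : T.IsPositive) (c : ℝ) (x : E) :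
    c * ‖x‖ ≤ ‖T x + c • x‖ := by
  rcases (norm_nonneg x).eq_or_lt with hx | hx
  · rw [← hx, mul_zero]; exact norm_nonneg _
  refine le_of_mul_le_mul_right ?_ hx
  calc c * ‖x‖ * ‖x‖ = inner ℝ (c • x) x := by
        rw [real_inner_smul_left, real_inner_self_eq_norm_sq]; ring
    _ ≤ inner ℝ (T x + c • x) x := by
        rw [inner_add_left]; linarith [hT.inner_nonneg_left x]
    _ ≤ ‖T x + c • x‖ * ‖x‖ := real_inner_le_norm _ _

theorem HasCompactSupport.of_forall_eq_zero_of_eq_zero {X α β γ : Type*} [TopologicalSpace X]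
    [Zero α] [Zero β] [Zero γ] {f : X → α} {g : X → β} {F : X → γ} (hf : HasCompactSupport f)
    (hg : HasCompactSupport g) (hF : ∀ x, f x = 0 → g x = 0 → F x = 0) : HasCompactSupport F :=
  .intro' (hf.union hg) ((isClosed_tsupport f).union (isClosed_tsupport g)) fun _ hx =>
    hF _ (image_eq_zero_of_notMem_tsupport fun h => hx (.inl h))
      (image_eq_zero_of_notMem_tsupport fun h => hx (.inr h))

section EnergyIdentity

variable {E : Type*} [NormedAddCommGroup E] [InnerProductSpace ℝ E] {w w' : ℝ → E}

theorem Continuous.integrable_of_eq_zero_of_hasDerivAt {F : ℝ → ℝ} (hF : Continuous F)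
    (hw : ∀ s, HasDerivAt w (w' s) s) (hcw : HasCompactSupport w)
    (hF0 : ∀ s, w s = 0 → w' s = 0 → F s = 0) : Integrable F := by
  have hcw' : HasCompactSupport w' := by
    rw [show w' = deriv w from funext fun s => (hw s).deriv.symm]
    exact hcw.deriv
  exact hF.integrable_of_hasCompactSupport (hcw.of_forall_eq_zero_of_eq_zero hcw' hF0)

theorem hasDerivAt_inner_map_self_add_mul_norm_sq {T : E →L[ℝ] E}
    (hT : (T : E →ₗ[ℝ] E).IsSymmetric) {g : ℝ → ℝ} {g' s : ℝ} (hg : HasDerivAt g g' s) {d : E}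
    (hw : HasDerivAt w d s) :
    HasDerivAt (fun t => inner ℝ (T (w t)) (w t) + g t * ‖w t‖ ^ 2)
      (2 * inner ℝ d (T (w s) + g s • w s) + g' * ‖w s‖ ^ 2) s := by
  have hTw := (T.hasFDerivAt.comp_hasDerivAt s hw).inner ℝ hw
  refine (hTw.add (hg.mul hw.norm_sq)).congr_deriv ?_
  have hsym : inner ℝ (T d) (w s) = inner ℝ d (T (w s)) := hT d (w s)
  rw [Function.comp_apply, hsym, inner_add_right, real_inner_smul_right, real_inner_comm d (w s),
    real_inner_comm d (T (w s))]
  ring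

theorem integrable_norm_sq_add_norm_sq_add_mul_norm_sq (T : E →L[ℝ] E) {g g' : ℝ → ℝ}
    (hg : Continuous g) (hg' : Continuous g') (hw : ∀ s, HasDerivAt w (w' s) s)
    (hw' : Continuous w') (hcw : HasCompactSupport w) :
    Integrable fun s => ‖w' s‖ ^ 2 + ‖T (w s) + g s • w s‖ ^ 2 + g' s * ‖w s‖ ^ 2 := by
  have hwc : Continuous w := continuous_iff_continuousAt.2 fun s => (hw s).continuousAt
  exact (by fun_prop : Continuous _).integrable_of_eq_zero_of_hasDerivAt hw hcw fun s hs hs' => by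
    simp [hs, hs']

theorem integral_norm_sub_sq_eq {T : E →L[ℝ] E} (hT : (T : E →ₗ[ℝ] E).IsSymmetric)
    {g g' : ℝ → ℝ} (hg : ∀ s, HasDerivAt g (g' s) s) (hg' : Continuous g')
    (hw : ∀ s, HasDerivAt w (w' s) s) (hw' : Continuous w') (hcw : HasCompactSupport w) :
    ∫ s, ‖w' s - (T (w s) + g s • w s)‖ ^ 2 =
      ∫ s, (‖w' s‖ ^ 2 + ‖T (w s) + g s • w s‖ ^ 2 + g' s * ‖w s‖ ^ 2) := by
  have hwc : Continuous w := continuous_iff_continuousAt.2 fun s => (hw s).continuousAt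
  have hgc : Continuous g := continuous_iff_continuousAt.2 fun s => (hg s).continuousAt
  set φ' : ℝ → ℝ := fun s => 2 * inner ℝ (w' s) (T (w s) + g s • w s) + g' s * ‖w s‖ ^ 2
  have hφ'c : Continuous φ' := by simp only [φ']; fun_prop
  have hφ' : Integrable φ' :=
    hφ'c.integrable_of_eq_zero_of_hasDerivAt hw hcw fun s hs hs' => by simp [φ', hs, hs']
  have hφ'_int : ∫ s, φ' s = 0 :=
    integral_eq_zero_of_hasDerivAt_of_integrable
      (fun s => hasDerivAt_inner_map_self_add_mul_norm_sq hT (hg s) (hw s)) hφ'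
      ((by fun_prop : Continuous fun s => inner ℝ (T (w s)) (w s) + g s * ‖w s‖ ^ 2)
        |>.integrable_of_eq_zero_of_hasDerivAt hw hcw fun s hs _ => by simp [hs])
  have hX := integrable_norm_sq_add_norm_sq_add_mul_norm_sq T hgc hg' hw hw' hcw
  calc ∫ s, ‖w' s - (T (w s) + g s • w s)‖ ^ 2
      = ∫ s, ((‖w' s‖ ^ 2 + ‖T (w s) + g s • w s‖ ^ 2 + g' s * ‖w s‖ ^ 2) - φ' s) := by
        congr 1 with s
        rw [norm_sub_sq_real]
        ring
    _ = ∫ s, (‖w' s‖ ^ 2 + ‖T (w s) + g s • w s‖ ^ 2 + g' s * ‖w s‖ ^ 2) := by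
        rw [integral_sub hX hφ', hφ'_int, sub_zero]

end EnergyIdentity

theorem ContinuousLinearMap.IsPositive.one_add_mul_norm_sq_le {E : Type*} [NormedAddCommGroup E]
    [InnerProductSpace ℝ E] {T : E →L[ℝ] E} (hT : T.IsPositive) {a b : ℝ} (ha : 0 ≤ a)
    (hb : 0 ≤ b) (hab : 1 / 4 ≤ b + ⨅ k : ℕ, |a - k|) (x : E) :
    (1 + b) * ‖x‖ ^ 2 ≤ 72 * (‖T x + a • x‖ ^ 2 + b * ‖x‖ ^ 2) := by
  have hdist : ⨅ k : ℕ, |a - k| ≤ a := by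
    simpa [abs_of_nonneg ha] using
      ciInf_le (f := fun k : ℕ => |a - k|) ⟨0, by rintro _ ⟨k, rfl⟩; exact abs_nonneg _⟩ 0
  -- either `b ≥ 1/8`, or `a ≥ 1/8`
  have hscalar : 1 + b ≤ 72 * (a ^ 2 + b) := by
    rcases le_or_gt (1 / 8) b with hb8 | hb8 <;> nlinarith
  have hTx : (a * ‖x‖) ^ 2 ≤ ‖T x + a • x‖ ^ 2 :=
    pow_le_pow_left₀ (mul_nonneg ha (norm_nonneg x)) (hT.mul_norm_le_norm_add_smul a x) 2
  calc (1 + b) * ‖x‖ ^ 2 ≤ 72 * (a ^ 2 + b) * ‖x‖ ^ 2 := by gcongr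
    _ = 72 * ((a * ‖x‖) ^ 2 + b * ‖x‖ ^ 2) := by ring
    _ ≤ 72 * (‖T x + a • x‖ ^ 2 + b * ‖x‖ ^ 2) := by gcongr

/-- Weighted `L²` Carleman estimate for `∂_s − H` with weight `e^{h(s)}`: if `h` is
increasing, convex and twice differentiable with `d(h′(s),ℕ) + h″(s) ≥ 1/4`, then
`‖(1+h″)^{1/2} e^{h} v‖_{L²} ≲ ‖e^{h}(∂_s − H)v‖_{L²}` (in squared form), uniformly
over Hilbert spaces and self-adjoint operators `H` with spectrum in `ℕ`. -/
theorem stmt_5 :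
    ∃ C : ℝ, 0 < C ∧
      ∀ (E : Type) [NormedAddCommGroup E] [InnerProductSpace ℝ E] [CompleteSpace E]
        (H : E →L[ℝ] E), IsSelfAdjoint H →
        spectrum ℝ H ⊆ Set.range (fun k : ℕ => (k : ℝ)) →
        ∀ (h h' h'' : ℝ → ℝ),
          (∀ s, HasDerivAt h (h' s) s) →
          (∀ s, HasDerivAt h' (h'' s) s) →
          Continuous h'' →
          (∀ s, 0 ≤ h' s) →
          (∀ s, 0 ≤ h'' s) →
          (∀ s, (1 : ℝ)/4 ≤ h'' s + ⨅ k : ℕ, |h' s - (k : ℝ)|) →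
          ∀ (v v' : ℝ → E), (∀ s, HasDerivAt v (v' s) s) → Continuous v' →
            HasCompactSupport v →
            (∫ s : ℝ, (1 + h'' s) * ‖Real.exp (h s) • v s‖^2) ≤
              C * ∫ s : ℝ, ‖Real.exp (h s) • (v' s - H (v s))‖^2 := by
  refine ⟨72, by norm_num, fun E _ _ _ H hH hspec h h' h'' hh hh' hh'' hh'0 hh''0 hgap v v' hv
    hv' hcv => ?_⟩
  have hHpos : H.IsPositive := hH.isPositive_of_spectrum_nonneg fun r hr => by
    obtain ⟨k, rfl⟩ := hspec hr
    positivity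
  have hhc : Continuous h := continuous_iff_continuousAt.2 fun s => (hh s).continuousAt
  have hh'c : Continuous h' := continuous_iff_continuousAt.2 fun s => (hh' s).continuousAt
  have hvc : Continuous v := continuous_iff_continuousAt.2 fun s => (hv s).continuousAt
  set w : ℝ → E := fun s => Real.exp (h s) • v s
  -- the derivative of `w`, written so that `w' - (H w + h' w)` is the right-hand integrand
  set w' : ℝ → E := fun s => Real.exp (h s) • (v' s - H (v s)) + (H (w s) + h' s • w s)
  have hw : ∀ s, HasDerivAt w (w' s) s := fun s =>
    ((hh s).exp.smul (hv s)).congr_deriv (by simp only [w', w, map_smul, smul_smul]; module)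
  have hw' : Continuous w' := by fun_prop
  have henergy := integral_norm_sub_sq_eq hHpos.isSymmetric hh' hh'' hw hw' hcv.smul_left
  simp only [w', add_sub_cancel_right] at henergy
  rw [henergy, ← integral_const_mul]
  have hint := integrable_norm_sq_add_norm_sq_add_mul_norm_sq H hh'c hh'' hw hw' hcv.smul_left
  refine integral_mono_of_nonneg
    (.of_forall fun s => mul_nonneg (by linarith [hh''0 s]) (sq_nonneg _)) (hint.const_mul 72)
    (.of_forall fun s => ?_)
  linarith [hHpos.one_add_mul_norm_sq_le (hh'0 s) (hh''0 s) (hgap s) (w s), sq_nonneg ‖w' s‖]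
end

section
/- Let (ε_i)_{i∈ℤ} be a positive, slowly varying (|ln ε_i − ln ε_{i+1}| ≤ 1/2), summable sequence and τ ≫ 1. Then there exists a convex C² function h : ℝ → ℝ with: (1) h′ ∈ [τ, 2τ]; (2) h″(s) + dist(h′(s), ℕ) > 1/4 for all s; (3) ε_i τ ≲ h″(s) ≲ ε_i τ + 1 for s ∈ [i, i+1]; (4) |h‴| ≲ h″. -/
/-!
Take `h' = Y`, the solution of `Y' = a (ε ⋆ bump) + spike Y` with `a = τ/1000` and `Y 0 = 3τ/2`,
where `ε ⋆ bump = latticeConv ε bump = ∑ᵢ εᵢ bump (· - i)` and `bump` is a `C¹` bump on `[0, 2]`.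
On `[i, i + 1]` only two translates are active, so by slow variation `ε ⋆ bump ≈ εᵢ` and
`|ε ⋆ bump'| ≲ εᵢ`; with `|spike'| ≤ 3` this gives the bounds on `h''` and `|h'''| ≲ h''`.
The term `spike Y` is large when `Y` is near an integer, which gives `h'' + dist (h', ℕ) > 1/4`.
Finally `Y` increases by at most `100/3 (2a + 1) ≤ τ/2` in total: the first term integrates
to at most `2a`, and the second only acts where a `1`-periodic `gate` of mean `< 1` equals `1`.
-/

open Real Set Filter Topology
open scoped NNReal

noncomputable section

lemma hasDerivAt_posPart_sq (u : ℝ) : HasDerivAt (fun v : ℝ => v⁺ ^ 2) (2 * u⁺) u := by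
  refine hasDerivAt_of_hasDerivAt_of_ne' (f := fun v : ℝ => v⁺ ^ 2) (g := fun v => 2 * v⁺) (x := 0)
    (fun y hy => ?_) (by fun_prop) (by fun_prop) u
  rcases hy.lt_or_gt with hy | hy
  · have hzero : (fun v : ℝ => v⁺ ^ 2) =ᶠ[𝓝 y] fun _ => 0 := by
      filter_upwards [Iio_mem_nhds hy] with v hv
      rw [posPart_eq_zero.2 (le_of_lt hv), sq, zero_mul]
    rw [posPart_eq_zero.2 hy.le, mul_zero]
    exact (hasDerivAt_const y 0).congr_of_eventuallyEq hzero
  · have hsq : (fun v : ℝ => v⁺ ^ 2) =ᶠ[𝓝 y] fun v => v ^ 2 := by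
      filter_upwards [Ioi_mem_nhds hy] with v hv
      rw [posPart_eq_self.2 (le_of_lt hv)]
    rw [posPart_eq_self.2 hy.le]
    simpa using (hasDerivAt_pow 2 y).congr_of_eventuallyEq hsq

def bump (t : ℝ) : ℝ := (t * (2 - t))⁺ ^ 2

def bump' (t : ℝ) : ℝ := 2 * (t * (2 - t))⁺ * (2 - 2 * t)

lemma hasDerivAt_bump (t : ℝ) : HasDerivAt bump (bump' t) t := by
  have hpoly : HasDerivAt (fun v : ℝ => v * (2 - v)) (2 - 2 * t) t := by
    have := (hasDerivAt_id' t).mul ((hasDerivAt_id' t).const_sub 2)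
    exact this.congr_deriv (by ring)
  exact (hasDerivAt_posPart_sq _).comp t hpoly

lemma bump_nonneg (t : ℝ) : 0 ≤ bump t := sq_nonneg _

lemma posPart_mul_two_sub_le_one (t : ℝ) : (t * (2 - t))⁺ ≤ 1 :=
  max_le (by nlinarith [sq_nonneg (t - 1)]) zero_le_one

lemma bump_le_one (t : ℝ) : bump t ≤ 1 := by
  have := posPart_mul_two_sub_le_one t
  unfold bump; nlinarith [posPart_nonneg (t * (2 - t))]

lemma abs_bump_le_one (t : ℝ) : |bump t| ≤ 1 := by
  rw [abs_of_nonneg (bump_nonneg t)]; exact bump_le_one t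

lemma posPart_mul_two_sub_eq_zero {t : ℝ} (ht : t ≤ 0 ∨ 2 ≤ t) : (t * (2 - t))⁺ = 0 :=
  posPart_eq_zero.2 (by rcases ht with ht | ht <;> nlinarith)

lemma bump_eq_zero {t : ℝ} (ht : t ≤ 0 ∨ 2 ≤ t) : bump t = 0 := by
  simp [bump, posPart_mul_two_sub_eq_zero ht]

lemma bump'_eq_zero {t : ℝ} (ht : t ≤ 0 ∨ 2 ≤ t) : bump' t = 0 := by
  simp [bump', posPart_mul_two_sub_eq_zero ht]

lemma abs_bump'_le (t : ℝ) : |bump' t| ≤ 4 := by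
  rcases le_or_gt (t * (2 - t)) 0 with h | h
  · simp [bump', posPart_eq_zero.2 h]
  · have hslope : |2 - 2 * t| ≤ 2 := abs_le.2 ⟨by nlinarith, by nlinarith⟩
    have := posPart_mul_two_sub_le_one t
    rw [bump', abs_mul, abs_mul, abs_of_nonneg (posPart_nonneg _), abs_two]
    nlinarith [abs_nonneg (2 - 2 * t), posPart_nonneg (t * (2 - t))]

lemma one_half_le_bump_add_bump {t : ℝ} (h₀ : 0 ≤ t) (h₁ : t ≤ 1) :
    1 / 2 ≤ bump t + bump (t + 1) := by
  rw [bump, bump, posPart_eq_self.2 (by nlinarith), posPart_eq_self.2 (by nlinarith)]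
  nlinarith [sq_nonneg (t * (1 - t)), sq_nonneg (2 * t - 1), sq_nonneg (1 - t ^ 2)]

lemma continuous_bump : Continuous bump := by unfold bump; fun_prop

def bumpPrimitive (t : ℝ) : ℝ := ∫ u in (0 : ℝ)..t, bump u

lemma hasDerivAt_bumpPrimitive (t : ℝ) : HasDerivAt bumpPrimitive (bump t) t :=
  (continuous_bump.integral_hasStrictDerivAt 0 t).hasDerivAt

lemma integral_bump_eq_zero {x y : ℝ} (h : ∀ u ∈ uIcc x y, u ≤ 0 ∨ 2 ≤ u) :
    ∫ u in x..y, bump u = 0 := by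
  rw [intervalIntegral.integral_congr (g := fun _ => 0) fun u hu => bump_eq_zero (h u hu)]
  simp

lemma bumpPrimitive_of_nonpos {t : ℝ} (ht : t ≤ 0) : bumpPrimitive t = 0 :=
  integral_bump_eq_zero fun u hu => Or.inl <| by rw [uIcc_of_ge ht] at hu; exact hu.2

lemma bumpPrimitive_of_two_le {t : ℝ} (ht : 2 ≤ t) : bumpPrimitive t = bumpPrimitive 2 := by
  rw [bumpPrimitive, ← intervalIntegral.integral_add_adjacent_intervals
    (continuous_bump.intervalIntegrable 0 2) (continuous_bump.intervalIntegrable 2 t),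
    integral_bump_eq_zero (x := 2) fun u hu => Or.inr <| by rw [uIcc_of_le ht] at hu; exact hu.1,
    add_zero, bumpPrimitive]

lemma bumpPrimitive_le_self {t : ℝ} (ht : 0 ≤ t) : bumpPrimitive t ≤ t := by
  calc bumpPrimitive t ≤ ∫ _ in (0 : ℝ)..t, (1 : ℝ) :=
        intervalIntegral.integral_mono_on ht (continuous_bump.intervalIntegrable _ _)
          intervalIntegrable_const fun u _ => bump_le_one u
    _ = t := by simp

lemma bumpPrimitive_nonneg (t : ℝ) : 0 ≤ bumpPrimitive t := by
  rcases le_total t 0 with ht | ht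
  · exact (bumpPrimitive_of_nonpos ht).ge
  · exact intervalIntegral.integral_nonneg ht fun u _ => bump_nonneg u

lemma bumpPrimitive_le_two (t : ℝ) : bumpPrimitive t ≤ 2 := by
  rcases le_total t 0 with h0 | h0
  · rw [bumpPrimitive_of_nonpos h0]; exact zero_le_two
  rcases le_total t 2 with h2 | h2
  · exact (bumpPrimitive_le_self h0).trans h2
  · rw [bumpPrimitive_of_two_le h2]; exact bumpPrimitive_le_self zero_le_two

lemma abs_bumpPrimitive_le (t : ℝ) : |bumpPrimitive t| ≤ 2 := by
  rw [abs_of_nonneg (bumpPrimitive_nonneg t)]; exact bumpPrimitive_le_two t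

/-- Large near the integers and zero near the half-integers (where `cos (2πu) ≤ -19/20`). -/
def spike (u : ℝ) : ℝ := (19 / 20 + cos (2 * π * u))⁺ ^ 2 / 10

def spike' (u : ℝ) : ℝ := 2 * (19 / 20 + cos (2 * π * u))⁺ * (-sin (2 * π * u) * (2 * π)) / 10

lemma hasDerivAt_spike (u : ℝ) : HasDerivAt spike (spike' u) u := by
  have hcos : HasDerivAt (fun v => 19 / 20 + cos (2 * π * v)) (-sin (2 * π * u) * (2 * π)) u :=
    ((hasDerivAt_cos _).comp u ((hasDerivAt_id' u).const_mul (2 * π) |>.congr_deriv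
      (mul_one _))).const_add _
  exact ((hasDerivAt_posPart_sq _).comp u hcos).div_const 10

lemma spike_nonneg (u : ℝ) : 0 ≤ spike u := by unfold spike; positivity

lemma posPart_cos_le (u : ℝ) : (19 / 20 + cos (2 * π * u))⁺ ≤ 39 / 20 :=
  max_le (by linarith [cos_le_one (2 * π * u)]) (by norm_num)

lemma spike_le (u : ℝ) : spike u ≤ 2 / 5 := by
  have := posPart_cos_le u
  unfold spike; nlinarith [posPart_nonneg (19 / 20 + cos (2 * π * u))]

lemma abs_spike'_le (u : ℝ) : |spike' u| ≤ 3 := by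
  have hm := posPart_cos_le u
  have hm₀ := posPart_nonneg (19 / 20 + cos (2 * π * u))
  have hsin := abs_sin_le_one (2 * π * u)
  rw [spike', abs_div, abs_mul, abs_mul, abs_mul, abs_neg, abs_two, abs_of_nonneg hm₀,
    abs_of_pos (by positivity : 0 < 2 * π), abs_of_pos (by norm_num : (0 : ℝ) < 10)]
  have : 2 * (19 / 20 + cos (2 * π * u))⁺ * |sin (2 * π * u)| ≤ 39 / 10 := by
    nlinarith [abs_nonneg (sin (2 * π * u))]
  nlinarith [pi_lt_d2, pi_pos]

lemma lipschitzWith_spike : LipschitzWith 3 spike := by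
  refine lipschitzWith_of_nnnorm_deriv_le (fun u => (hasDerivAt_spike u).differentiableAt)
    fun u => ?_
  rw [(hasDerivAt_spike u).deriv, ← NNReal.coe_le_coe, coe_nnnorm, Real.norm_eq_abs]
  exact abs_spike'_le u

lemma one_quarter_lt_spike_add_of_abs_le {e : ℝ} (he : |e| ≤ 1 / 4) :
    1 / 4 < spike e + |e| := by
  have hcos : 1 - 4 * |e| ≤ cos (2 * π * e) := by
    rw [← cos_abs, abs_mul, abs_of_pos (by positivity : 0 < 2 * π)]
    have := one_sub_mul_le_cos (x := 2 * π * |e|) (by positivity) (by nlinarith [pi_pos])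
    field_simp at this ⊢
    linarith
  have hpos : 0 ≤ 19 / 20 + cos (2 * π * e) := by linarith
  have hsq : (39 / 20 - 4 * |e|) ^ 2 ≤ (19 / 20 + cos (2 * π * e)) ^ 2 :=
    pow_le_pow_left₀ (by linarith) (by linarith) 2
  rw [spike, posPart_eq_self.2 hpos]
  nlinarith [sq_nonneg (4 * |e| - 7 / 10), abs_nonneg e]

lemma one_quarter_lt_spike_add_abs_sub_round (y : ℝ) : 1 / 4 < spike y + |y - round y| := by
  have hper : spike y = spike (y - round y) := by
    have : 2 * π * y = 2 * π * (y - round y) + (round y : ℤ) * (2 * π) := by ring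
    rw [spike, spike, this, cos_add_int_mul_two_pi]
  rw [hper]
  rcases le_or_gt |y - round y| (1 / 4) with h | h
  · exact one_quarter_lt_spike_add_of_abs_le h
  · linarith [spike_nonneg (y - round y)]

lemma Function.Periodic.intervalIntegral_le_mul_add_one {g : ℝ → ℝ} (hg : Function.Periodic g 1)
    (hcont : Continuous g) (h₀ : ∀ u, 0 ≤ g u) (h₁ : ∀ u, g u ≤ 1) (y : ℝ) {Δ : ℝ} (hΔ : 0 ≤ Δ) :
    ∫ u in y..y + Δ, g u ≤ (∫ u in (0 : ℝ)..1, g u) * Δ + 1 := by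
  set n : ℕ := ⌊Δ⌋₊
  have hint : ∀ a b, IntervalIntegrable g MeasureTheory.volume a b :=
    fun _ _ => hcont.intervalIntegrable _ _
  have hperiods : ∫ u in y..y + n, g u = n * ∫ u in (0 : ℝ)..1, g u := by
    have := hg.intervalIntegral_add_zsmul_eq n y hint
    rw [hg.intervalIntegral_add_eq y 0, zero_add] at this
    simpa using this
  have hrest : ∫ u in y + n..y + Δ, g u ≤ Δ - n := by
    calc ∫ u in y + n..y + Δ, g u ≤ ∫ _ in y + n..y + Δ, (1 : ℝ) :=
          intervalIntegral.integral_mono_on (by linarith [Nat.floor_le hΔ]) (hint _ _)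
            intervalIntegrable_const fun u _ => h₁ u
      _ = Δ - n := by simp
  have hmean : 0 ≤ ∫ u in (0 : ℝ)..1, g u :=
    intervalIntegral.integral_nonneg zero_le_one fun u _ => h₀ u
  rw [← intervalIntegral.integral_add_adjacent_intervals (hint y (y + n)) (hint _ _), hperiods]
  nlinarith [Nat.floor_le hΔ, Nat.lt_floor_add_one Δ]

/-- Equal to `1` on the support of `spike`, but of mean less than `1`. -/
def gate (u : ℝ) : ℝ := 1 - 20 * (-(19 / 20) - cos (2 * π * u))⁺

lemma continuous_gate : Continuous gate := by unfold gate; fun_prop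

lemma gate_periodic : Function.Periodic gate 1 := fun u => by
  have : 2 * π * (u + 1) = 2 * π * u + (1 : ℤ) * (2 * π) := by push_cast; ring
  rw [gate, gate, this, cos_add_int_mul_two_pi]

lemma gate_nonneg (u : ℝ) : 0 ≤ gate u := by
  have : (-(19 / 20) - cos (2 * π * u))⁺ ≤ 1 / 20 :=
    max_le (by linarith [neg_one_le_cos (2 * π * u)]) (by norm_num)
  unfold gate; linarith

lemma gate_le_one (u : ℝ) : gate u ≤ 1 := by
  unfold gate; linarith [posPart_nonneg (-(19 / 20) - cos (2 * π * u))]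

lemma gate_le_of_mem_Icc {u : ℝ} (hu : u ∈ Icc (12 / 25 : ℝ) (13 / 25)) : gate u ≤ 1 / 5 := by
  have hx : |2 * π * u - π| ≤ 13 / 100 := by
    rw [show 2 * π * u - π = 2 * π * (u - 1 / 2) by ring, abs_mul,
      abs_of_pos (by positivity : 0 < 2 * π)]
    have : |u - 1 / 2| ≤ 1 / 50 := abs_le.2 ⟨by linarith [hu.1], by linarith [hu.2]⟩
    nlinarith [pi_lt_d2, pi_pos]
  have hcos : cos (2 * π * u) ≤ -(99 / 100) := by
    rw [show 2 * π * u = (2 * π * u - π) + π by ring, cos_add_pi]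
    nlinarith [one_sub_sq_div_two_le_cos (x := 2 * π * u - π), sq_abs (2 * π * u - π),
      abs_nonneg (2 * π * u - π)]
  have : 1 / 25 ≤ (-(19 / 20) - cos (2 * π * u))⁺ := le_max_of_le_left (by linarith)
  unfold gate; linarith

lemma integral_gate_le : ∫ u in (0 : ℝ)..1, gate u ≤ 97 / 100 := by
  have hint : ∀ a b, IntervalIntegrable gate MeasureTheory.volume a b :=
    fun _ _ => continuous_gate.intervalIntegrable _ _
  have hbound : ∀ a b c, a ≤ b → (∀ u ∈ Icc a b, gate u ≤ c) → ∫ u in a..b, gate u ≤ c * (b - a) :=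
    fun a b c hab h => by
      simpa [mul_comm] using intervalIntegral.integral_mono_on hab (hint a b)
        intervalIntegrable_const h
  rw [← intervalIntegral.integral_add_adjacent_intervals (hint 0 (12 / 25)) (hint _ 1),
    ← intervalIntegral.integral_add_adjacent_intervals (hint (12 / 25) (13 / 25)) (hint _ 1)]
  have h₁ := hbound 0 (12 / 25) 1 (by norm_num) fun u _ => gate_le_one u
  have h₂ := hbound (12 / 25) (13 / 25) (1 / 5) (by norm_num) fun u hu => gate_le_of_mem_Icc hu
  have h₃ := hbound (13 / 25) 1 1 (by norm_num) fun u _ => gate_le_one u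
  linarith

lemma spike_le_gate_mul {b : ℝ} (hb : 0 ≤ b) (u : ℝ) : spike u ≤ gate u * (b + spike u) := by
  rcases le_or_gt (-(19 / 20) - cos (2 * π * u)) 0 with h | h
  · rw [gate, posPart_eq_zero.2 h]; linarith
  · have : spike u = 0 := by rw [spike, posPart_eq_zero.2 (by linarith)]; norm_num
    rw [this, add_zero]
    exact mul_nonneg (gate_nonneg u) hb

def latticeConv (ε : ℤ → ℝ) (ψ : ℝ → ℝ) (s : ℝ) : ℝ := ∑' i : ℤ, ε i * ψ (s - i)

section LatticeConv

variable {ε : ℤ → ℝ} {ψ ψ' : ℝ → ℝ} {M : ℝ}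

lemma summable_latticeConv (hε : Summable ε) (hψ : ∀ u, |ψ u| ≤ M) (s : ℝ) :
    Summable fun i : ℤ => ε i * ψ (s - i) :=
  (hε.abs.mul_left M).of_norm_bounded fun i => by
    rw [Real.norm_eq_abs, abs_mul, mul_comm]
    exact mul_le_mul_of_nonneg_right (hψ _) (abs_nonneg _)

lemma hasDerivAt_latticeConv {M' : ℝ} (hε : Summable ε) (hψ : ∀ u, HasDerivAt ψ (ψ' u) u)
    (hψM : ∀ u, |ψ u| ≤ M) (hψ'M : ∀ u, |ψ' u| ≤ M') (s : ℝ) :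
    HasDerivAt (latticeConv ε ψ) (latticeConv ε ψ' s) s := by
  refine hasDerivAt_tsum (g := fun i y => ε i * ψ (y - i)) (g' := fun i y => ε i * ψ' (y - i))
    (hε.abs.mul_left M') (fun i y => ?_) (fun i y => ?_) (summable_latticeConv hε hψM 0) s
  · simpa using ((hψ (y - i)).comp y ((hasDerivAt_id' y).sub_const (i : ℝ))).const_mul (ε i)
  · rw [Real.norm_eq_abs, abs_mul, mul_comm]
    exact mul_le_mul_of_nonneg_right (hψ'M _) (abs_nonneg _)

lemma latticeConv_nonneg (hε : ∀ i, 0 ≤ ε i) (hψ : ∀ u, 0 ≤ ψ u) (s : ℝ) :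
    0 ≤ latticeConv ε ψ s :=
  tsum_nonneg fun i => mul_nonneg (hε i) (hψ _)

lemma latticeConv_le (hε : Summable ε) (hε₀ : ∀ i, 0 ≤ ε i) (hψ : ∀ u, |ψ u| ≤ M) (s : ℝ) :
    latticeConv ε ψ s ≤ M * ∑' i, ε i := by
  rw [← tsum_mul_left]
  refine (summable_latticeConv hε hψ s).tsum_le_tsum (fun i => ?_) (hε.mul_left M)
  rw [mul_comm M]
  exact mul_le_mul_of_nonneg_left ((le_abs_self _).trans (hψ _)) (hε₀ i)

lemma latticeConv_eq_of_mem_Icc (hψ : ∀ u, u ≤ 0 ∨ 2 ≤ u → ψ u = 0) {i : ℤ} {s : ℝ}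
    (hs : s ∈ Icc (i : ℝ) (i + 1)) :
    latticeConv ε ψ s = ε (i - 1) * ψ (s - i + 1) + ε i * ψ (s - i) := by
  rw [latticeConv, tsum_eq_sum (s := {i - 1, i}) fun j hj => ?_, Finset.sum_pair (by omega)]
  · push_cast; ring_nf
  · simp only [Finset.mem_insert, Finset.mem_singleton, not_or] at hj
    rcases (by omega : j ≤ i - 2 ∨ i + 1 ≤ j) with h | h
    · have : (j : ℝ) ≤ i - 2 := by exact_mod_cast h
      rw [hψ _ (Or.inr (by linarith [hs.1])), mul_zero]
    · have : (i : ℝ) + 1 ≤ j := by exact_mod_cast h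
      rw [hψ _ (Or.inl (by linarith [hs.2])), mul_zero]

end LatticeConv

def SlowlyVarying (ε : ℤ → ℝ) : Prop := ∀ i, |log (ε i) - log (ε (i + 1))| ≤ 1 / 2

lemma le_two_mul_of_abs_log_sub_le {x y : ℝ} (hx : 0 < x) (hy : 0 < y)
    (h : |log x - log y| ≤ 1 / 2) : y ≤ 2 * x := by
  have hexp : exp (1 / 2) ≤ 2 := by
    have : exp (1 / 2) ^ 2 ≤ 2 ^ 2 :=
      calc exp (1 / 2) ^ 2 = exp 1 := by rw [← exp_nat_mul]; norm_num
        _ ≤ 2 ^ 2 := by linarith [exp_one_lt_d9]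
    exact (pow_le_pow_iff_left₀ (exp_pos _).le zero_le_two two_ne_zero).1 this
  calc y = exp (log y) := (exp_log hy).symm
    _ ≤ exp (log x + 1 / 2) := exp_le_exp.2 (by linarith [(abs_le.1 h).1])
    _ = x * exp (1 / 2) := by rw [exp_add, exp_log hx]
    _ ≤ 2 * x := by nlinarith

namespace SlowlyVarying

variable {ε : ℤ → ℝ}

lemma le_two_mul_pred (h : SlowlyVarying ε) (hpos : ∀ i, 0 < ε i) (i : ℤ) : ε i ≤ 2 * ε (i - 1) :=
  le_two_mul_of_abs_log_sub_le (hpos _) (hpos _) (by simpa using h (i - 1))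

lemma pred_le_two_mul (h : SlowlyVarying ε) (hpos : ∀ i, 0 < ε i) (i : ℤ) : ε (i - 1) ≤ 2 * ε i :=
  le_two_mul_of_abs_log_sub_le (hpos _) (hpos _) (by simpa [abs_sub_comm] using h (i - 1))

end SlowlyVarying

section GlobalSolution

variable {E : Type*} [NormedAddCommGroup E] [NormedSpace ℝ E] [CompleteSpace E] {v : ℝ → E → E}
  {K L : ℝ≥0}

lemma exists_forall_mem_Ioo_hasDerivAt_of_lipschitzWith (hlip : ∀ t, LipschitzWith K (v t))
    (hcont : ∀ x, Continuous (v · x)) (hbdd : ∀ t x, ‖v t x‖ ≤ L) (x₀ : E) (T : ℝ≥0) :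
    ∃ γ : ℝ → E, γ 0 = x₀ ∧ ∀ t ∈ Ioo (-(T : ℝ)) T, HasDerivAt γ (v t (γ t)) t := by
  have hpl : IsPicardLindelof v (tmin := -(T : ℝ)) (tmax := T) ⟨0, by simp⟩ x₀ (L * T) 0 L K :=
    ⟨fun t _ => (hlip t).lipschitzOnWith, fun x _ => (hcont x).continuousOn,
      fun t _ x _ => hbdd t x, by simp⟩
  obtain ⟨γ, hγ₀, hγ⟩ := hpl.exists_eq_forall_mem_Icc_hasDerivWithinAt₀
  exact ⟨γ, hγ₀, fun t ht => (hγ t (Ioo_subset_Icc_self ht)).hasDerivAt (Icc_mem_nhds ht.1 ht.2)⟩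

lemma exists_isIntegralCurve_of_lipschitzWith (hlip : ∀ t, LipschitzWith K (v t))
    (hcont : ∀ x, Continuous (v · x)) (hbdd : ∀ t x, ‖v t x‖ ≤ L) (x₀ : E) :
    ∃ γ : ℝ → E, γ 0 = x₀ ∧ IsIntegralCurve γ v := by
  choose γ hγ₀ hγ using fun n : ℕ =>
    exists_forall_mem_Ioo_hasDerivAt_of_lipschitzWith hlip hcont hbdd x₀ n
  simp only [NNReal.coe_natCast] at hγ
  have hagree : ∀ n m : ℕ, n ≤ m → EqOn (γ n) (γ m) (Ioo (-(n : ℝ)) n) := fun n m hnm => by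
    have hsub : Ioo (-(n : ℝ)) n ⊆ Ioo (-(m : ℝ)) m :=
      Ioo_subset_Ioo (by simpa using hnm) (by simpa using hnm)
    rcases n.eq_zero_or_pos with rfl | hn
    · simp
    refine ODE_solution_unique_of_mem_Ioo (s := fun _ => univ) (t₀ := 0)
      (fun t _ => (hlip t).lipschitzOnWith) ⟨by simpa using hn, by simpa using hn⟩
      (fun t ht => ⟨hγ n t ht, trivial⟩) (fun t ht => ⟨hγ m t (hsub ht), trivial⟩)
      (by rw [hγ₀, hγ₀])
  have hagree' : ∀ (n m : ℕ) (t : ℝ), |t| < n → |t| < m → γ n t = γ m t := fun n m t hn hm => by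
    rcases le_total n m with h | h
    · exact hagree n m h (abs_lt.1 hn)
    · exact (hagree m n h (abs_lt.1 hm)).symm
  refine ⟨fun t => γ (⌊|t|⌋₊ + 1) t, by simp [hγ₀], fun t₀ => ?_⟩
  set N := ⌊|t₀|⌋₊ + 2
  have hN : ∀ t ∈ Metric.ball t₀ 1, |t| < N := fun t ht => by
    rw [Metric.mem_ball, Real.dist_eq] at ht
    have := abs_sub_abs_le_abs_sub t t₀
    have := Nat.lt_floor_add_one |t₀|
    push_cast [N]; linarith
  have heq : (fun t => γ (⌊|t|⌋₊ + 1) t) =ᶠ[𝓝 t₀] γ N :=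
    eventually_of_mem (Metric.ball_mem_nhds t₀ one_pos) fun t ht =>
      hagree' _ _ t (by push_cast; exact Nat.lt_floor_add_one _) (hN t ht)
  have := (hγ N t₀ (abs_lt.1 (hN t₀ (Metric.mem_ball_self one_pos)))).congr_of_eventuallyEq heq
  rwa [← heq.eq_of_nhds] at this

end GlobalSolution

lemma antitone_sub_sub_comp_of_le_mul {Y A G b φ g : ℝ → ℝ}
    (hY : ∀ s, HasDerivAt Y (b s + φ (Y s)) s) (hA : ∀ s, HasDerivAt A (b s) s)
    (hG : ∀ y, HasDerivAt G (g y) y) (hgate : ∀ s, φ (Y s) ≤ g (Y s) * (b s + φ (Y s))) :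
    Antitone fun s => Y s - A s - G (Y s) := by
  have hW : ∀ s, HasDerivAt (fun s => Y s - A s - G (Y s))
      (b s + φ (Y s) - b s - g (Y s) * (b s + φ (Y s))) s := fun s =>
    ((hY s).sub (hA s)).sub ((hG (Y s)).comp s (hY s))
  refine antitone_of_deriv_nonpos (fun s => (hW s).differentiableAt) fun s => ?_
  rw [(hW s).deriv]
  linarith [hgate s]

lemma abs_sub_round_le_iInf_abs_sub_natCast (y : ℝ) : |y - round y| ≤ ⨅ k : ℕ, |y - k| :=
  le_ciInf fun k => by exact_mod_cast round_le y k

section BumpConv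

variable {ε : ℤ → ℝ} {i : ℤ} {s : ℝ}

lemma latticeConv_bump_eq (hs : s ∈ Icc (i : ℝ) (i + 1)) :
    latticeConv ε bump s = ε (i - 1) * bump (s - i + 1) + ε i * bump (s - i) :=
  latticeConv_eq_of_mem_Icc (fun _ => bump_eq_zero) hs

lemma le_latticeConv_bump (hε : SlowlyVarying ε) (hpos : ∀ i, 0 < ε i)
    (hs : s ∈ Icc (i : ℝ) (i + 1)) : ε i / 4 ≤ latticeConv ε bump s := by
  have hpair := one_half_le_bump_add_bump (t := s - i) (by linarith [hs.1]) (by linarith [hs.2])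
  have hprev := hε.le_two_mul_pred hpos i
  rw [latticeConv_bump_eq hs]
  nlinarith [bump_nonneg (s - i), bump_nonneg (s - i + 1), hpos i]

lemma latticeConv_bump_le (hε : SlowlyVarying ε) (hpos : ∀ i, 0 < ε i)
    (hs : s ∈ Icc (i : ℝ) (i + 1)) : latticeConv ε bump s ≤ 3 * ε i := by
  have hprev := hε.pred_le_two_mul hpos i
  rw [latticeConv_bump_eq hs]
  nlinarith [bump_le_one (s - i), bump_le_one (s - i + 1), bump_nonneg (s - i),
    bump_nonneg (s - i + 1), hpos i, hpos (i - 1)]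

lemma abs_latticeConv_bump'_le (hε : SlowlyVarying ε) (hpos : ∀ i, 0 < ε i)
    (hs : s ∈ Icc (i : ℝ) (i + 1)) : |latticeConv ε bump' s| ≤ 12 * ε i := by
  have hprev := hε.pred_le_two_mul hpos i
  rw [latticeConv_eq_of_mem_Icc (fun _ => bump'_eq_zero) hs]
  calc |ε (i - 1) * bump' (s - i + 1) + ε i * bump' (s - i)|
      ≤ ε (i - 1) * 4 + ε i * 4 := by
        refine (abs_add_le _ _).trans (add_le_add ?_ ?_) <;>
        · rw [abs_mul, abs_of_pos (hpos _)]
          exact mul_le_mul_of_nonneg_left (abs_bump'_le _) (hpos _).le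
    _ ≤ 12 * ε i := by linarith

end BumpConv

/-- The right-hand side of the ODE `h'' = a (ε ⋆ bump) + spike (h')` defining `h'`. -/
def weightField (ε : ℤ → ℝ) (a s y : ℝ) : ℝ := a * latticeConv ε bump s + spike y

section WeightField

variable {ε : ℤ → ℝ} {a : ℝ} {Y : ℝ → ℝ}

lemma hasDerivAt_latticeConv_bump (hsum : Summable ε) (s : ℝ) :
    HasDerivAt (latticeConv ε bump) (latticeConv ε bump' s) s :=
  hasDerivAt_latticeConv hsum hasDerivAt_bump abs_bump_le_one abs_bump'_le s

lemma weightField_nonneg (hpos : ∀ i, 0 ≤ ε i) (ha : 0 ≤ a) (s y : ℝ) :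
    0 ≤ weightField ε a s y :=
  add_nonneg (mul_nonneg ha (latticeConv_nonneg hpos bump_nonneg s)) (spike_nonneg y)

lemma exists_isIntegralCurve_weightField (hsum : Summable ε) (hpos : ∀ i, 0 ≤ ε i)
    (hle : ∑' i, ε i ≤ 1) (ha : 0 ≤ a) (y₀ : ℝ) :
    ∃ Y : ℝ → ℝ, Y 0 = y₀ ∧ IsIntegralCurve Y (weightField ε a) := by
  refine exists_isIntegralCurve_of_lipschitzWith (K := 3) (L := (a + 1).toNNReal)
    (fun t => LipschitzWith.of_dist_le_mul fun x y => ?_) (fun y => ?_) (fun t y => ?_) y₀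
  · rw [weightField, weightField, dist_add_left]
    exact lipschitzWith_spike.dist_le_mul x y
  · exact (continuous_const.mul (continuous_iff_continuousAt.2 fun s =>
      (hasDerivAt_latticeConv_bump hsum s).continuousAt)).add continuous_const
  · have hconv := latticeConv_le hsum hpos abs_bump_le_one t
    rw [Real.norm_eq_abs, abs_of_nonneg (weightField_nonneg hpos ha t y),
      Real.coe_toNNReal _ (by linarith), weightField]
    nlinarith [spike_le y]

lemma IsIntegralCurve.monotone_of_weightField (hpos : ∀ i, 0 ≤ ε i) (ha : 0 ≤ a)
    (hY : IsIntegralCurve Y (weightField ε a)) : Monotone Y :=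
  monotone_of_deriv_nonneg (fun s => (hY s).differentiableAt) fun s => by
    rw [(hY s).deriv]; exact weightField_nonneg hpos ha s (Y s)

/-- `Y - A - G ∘ Y` is antitone for `A' = a (ε ⋆ bump)` and `G' = gate`: as `gate = 1` wherever
`spike` acts, `G ∘ Y` absorbs the growth of `Y` due to `spike`, while `G` grows with average
slope `≤ 97/100`. -/
lemma sub_le_of_isIntegralCurve_weightField (hsum : Summable ε) (hpos : ∀ i, 0 ≤ ε i)
    (hle : ∑' i, ε i ≤ 1) (ha : 0 ≤ a) (hY : IsIntegralCurve Y (weightField ε a))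
    {s₁ s₂ : ℝ} (h : s₁ ≤ s₂) : Y s₂ - Y s₁ ≤ 100 / 3 * (2 * a + 1) := by
  set A := fun s => a * latticeConv ε bumpPrimitive s
  set G := fun y => ∫ u in (0 : ℝ)..y, gate u
  have hA : ∀ s, HasDerivAt A (a * latticeConv ε bump s) s := fun s =>
    (hasDerivAt_latticeConv hsum hasDerivAt_bumpPrimitive abs_bumpPrimitive_le abs_bump_le_one
      s).const_mul a
  have hG : ∀ y, HasDerivAt G (gate y) y := fun y =>
    (continuous_gate.integral_hasStrictDerivAt 0 y).hasDerivAt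
  have hW := antitone_sub_sub_comp_of_le_mul hY hA hG
    (fun s => spike_le_gate_mul (mul_nonneg ha (latticeConv_nonneg hpos bump_nonneg s)) _) h
  have hA₁ : 0 ≤ A s₁ := mul_nonneg ha (latticeConv_nonneg hpos bumpPrimitive_nonneg s₁)
  have hA₂ : A s₂ ≤ 2 * a := by
    have := latticeConv_le hsum hpos abs_bumpPrimitive_le s₂
    simp only [A]; nlinarith
  have hΔ : 0 ≤ Y s₂ - Y s₁ := sub_nonneg.2 (hY.monotone_of_weightField hpos ha h)
  have hG₁₂ : G (Y s₂) - G (Y s₁) ≤ 97 / 100 * (Y s₂ - Y s₁) + 1 := by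
    have := gate_periodic.intervalIntegral_le_mul_add_one continuous_gate gate_nonneg gate_le_one
      (Y s₁) hΔ
    rw [add_sub_cancel] at this
    rw [intervalIntegral.integral_interval_sub_left (continuous_gate.intervalIntegrable _ _)
      (continuous_gate.intervalIntegrable _ _)]
    nlinarith [integral_gate_le]
  simp only at hW
  linarith

lemma abs_sub_le_of_isIntegralCurve_weightField (hsum : Summable ε) (hpos : ∀ i, 0 ≤ ε i)
    (hle : ∑' i, ε i ≤ 1) (ha : 0 ≤ a) (hY : IsIntegralCurve Y (weightField ε a)) (s : ℝ) :
    |Y s - Y 0| ≤ 100 / 3 * (2 * a + 1) := by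
  have hmono := hY.monotone_of_weightField hpos ha
  rcases le_total s 0 with hs | hs
  · rw [abs_of_nonpos (sub_nonpos.2 (hmono hs)), neg_sub]
    exact sub_le_of_isIntegralCurve_weightField hsum hpos hle ha hY hs
  · rw [abs_of_nonneg (sub_nonneg.2 (hmono hs))]
    exact sub_le_of_isIntegralCurve_weightField hsum hpos hle ha hY hs

lemma one_quarter_lt_weightField_add_iInf (hpos : ∀ i, 0 ≤ ε i) (ha : 0 ≤ a) (s y : ℝ) :
    1 / 4 < weightField ε a s y + ⨅ k : ℕ, |y - k| := by
  have := one_quarter_lt_spike_add_abs_sub_round y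
  have := abs_sub_round_le_iInf_abs_sub_natCast y
  have := mul_nonneg ha (latticeConv_nonneg hpos bump_nonneg s)
  rw [weightField]; linarith

lemma weightField_mem_Icc (hε : SlowlyVarying ε) (hpos : ∀ i, 0 < ε i) (ha : 0 ≤ a) {i : ℤ}
    {s : ℝ} (hs : s ∈ Icc (i : ℝ) (i + 1)) (y : ℝ) :
    a * ε i / 4 ≤ weightField ε a s y ∧ weightField ε a s y ≤ 3 * a * ε i + 2 / 5 := by
  have hlow := mul_le_mul_of_nonneg_left (le_latticeConv_bump hε hpos hs) ha
  have hupp := mul_le_mul_of_nonneg_left (latticeConv_bump_le hε hpos hs) ha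
  constructor <;> rw [weightField] <;> nlinarith [spike_nonneg y, spike_le y]

lemma hasDerivAt_weightField_comp (hsum : Summable ε) (hY : IsIntegralCurve Y (weightField ε a))
    (s : ℝ) : HasDerivAt (fun s => weightField ε a s (Y s))
      (a * latticeConv ε bump' s + spike' (Y s) * weightField ε a s (Y s)) s :=
  ((hasDerivAt_latticeConv_bump hsum s).const_mul a).add ((hasDerivAt_spike (Y s)).comp s (hY s))

lemma abs_deriv_weightField_comp_le (hε : SlowlyVarying ε) (hpos : ∀ i, 0 < ε i) (ha : 0 ≤ a)
    (s y : ℝ) :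
    |a * latticeConv ε bump' s + spike' y * weightField ε a s y| ≤ 51 * weightField ε a s y := by
  have hs : s ∈ Icc (⌊s⌋ : ℝ) (⌊s⌋ + 1) := ⟨Int.floor_le s, (Int.lt_floor_add_one s).le⟩
  have hW := weightField_nonneg (fun i => (hpos i).le) ha s y
  calc |a * latticeConv ε bump' s + spike' y * weightField ε a s y|
      ≤ |a * latticeConv ε bump' s| + |spike' y * weightField ε a s y| := abs_add_le _ _
    _ ≤ a * (12 * ε ⌊s⌋) + 3 * weightField ε a s y := by
        rw [abs_mul, abs_mul, abs_of_nonneg ha, abs_of_nonneg hW]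
        gcongr
        exacts [abs_latticeConv_bump'_le hε hpos hs, abs_spike'_le y]
    _ ≤ 51 * weightField ε a s y := by linarith [(weightField_mem_Icc hε hpos ha hs y).1]

end WeightField

end

/-- Construction of the convex time weight `h`: given a positive, slowly varying,
summable sequence `(ε_i)` and `τ` large enough, there is a convex function `h` with
`h′ ∈ [τ,2τ]`, spectral-gap property `h″(s) + dist(h′(s),ℕ) > 1/4`,
`ε_i τ ≲ h″ ≲ ε_i τ + 1` on `[i,i+1]`, and `|h‴| ≲ h″`. -/
theorem stmt_6 :
    ∃ C : ℝ, 0 < C ∧ ∃ τ₀ : ℝ, ∀ (ε : ℤ → ℝ),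
      (∀ i, 0 < ε i) →
      (∀ i, |Real.log (ε i) - Real.log (ε (i+1))| ≤ 1/2) →
      Summable ε →
      (∑' i, ε i) ≤ 1 →
      ∀ τ : ℝ, τ₀ ≤ τ →
        ∃ h h' h'' h''' : ℝ → ℝ,
          (∀ s, HasDerivAt h (h' s) s) ∧
          (∀ s, HasDerivAt h' (h'' s) s) ∧
          (∀ s, HasDerivAt h'' (h''' s) s) ∧
          (∀ s, 0 ≤ h'' s) ∧
          (∀ s, τ ≤ h' s ∧ h' s ≤ 2 * τ) ∧
          (∀ s, (1 : ℝ)/4 < h'' s + ⨅ k : ℕ, |h' s - (k : ℝ)|) ∧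
          (∀ i : ℤ, ∀ s ∈ Set.Icc (i : ℝ) ((i : ℝ) + 1),
            ε i * τ ≤ C * h'' s ∧ h'' s ≤ C * (ε i * τ + 1)) ∧
          (∀ s, |h''' s| ≤ C * h'' s) := by
  refine ⟨4000, by norm_num, 100, fun ε hpos hslow hsum hle τ hτ => ?_⟩
  have hpos₀ : ∀ i, 0 ≤ ε i := fun i => (hpos i).le
  have ha : 0 ≤ τ / 1000 := by positivity
  obtain ⟨Y, hY₀, hY⟩ := exists_isIntegralCurve_weightField hsum hpos₀ hle ha (3 * τ / 2)
  -- `Y` stays within `100/3 (2τ/1000 + 1) = τ/15 + 100/3 ≤ τ/2` of `3τ/2`.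
  have hrange : ∀ s, τ ≤ Y s ∧ Y s ≤ 2 * τ := fun s => by
    have := abs_le.1 (abs_sub_le_of_isIntegralCurve_weightField hsum hpos₀ hle ha hY s)
    rw [hY₀] at this
    constructor <;> linarith [this.1, this.2]
  refine ⟨fun s => ∫ u in (0 : ℝ)..s, Y u, Y, fun s => weightField ε (τ / 1000) s (Y s),
    fun s => τ / 1000 * latticeConv ε bump' s + spike' (Y s) * weightField ε (τ / 1000) s (Y s),
    fun s => (hY.continuous.integral_hasStrictDerivAt 0 s).hasDerivAt, hY,
    hasDerivAt_weightField_comp hsum hY, fun s => weightField_nonneg hpos₀ ha s (Y s), hrange,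
    fun s => one_quarter_lt_weightField_add_iInf hpos₀ ha s (Y s), fun i s hs => ?_,
    fun s => (abs_deriv_weightField_comp_le hslow hpos ha s (Y s)).trans ?_⟩
  · have := weightField_mem_Icc hslow hpos ha hs (Y s)
    constructor <;> nlinarith [hpos i]
  · linarith [weightField_nonneg hpos₀ ha s (Y s)]
end

section
/- For any L²-normalized Hermite eigenfunction h_λ in one dimension with eigenvalue λ (i.e. −h_λ″ + x²h_λ = λh_λ, ‖h_λ‖_{L²}=1), one has the interior pointwise bounds λ^{-1/4}|h_λ′(x)| + λ^{1/4}|h_λ(x)| ≲ 1 for |x| ≤ λ^{1/2}/2, with a universal constant. -/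
/-!
The energy `E = h'² + (λ - x²) h²` satisfies `E' = -2x h²`, so `|E y - E 0| ≤ 2 |y| ‖h‖²`.
To bound `E 0`, write `E = (h h')' + 2 (λ - x²) h²` and test against `φ = (λ - x²)²`, which
vanishes to second order at `±√λ`: two integrations by parts give
`∫ E φ = ∫ h² (φ''/2 + 2 (λ - x²) φ) ≲ λ³ ‖h‖²` over `[-√λ, √λ]`, while `∫ φ ≍ λ^{5/2}`.
Hence `E ≲ √λ ‖h‖²` on `|x| ≤ √λ / 2`, where `E` controls both `h'²` and `(3/4) λ h²`.
-/

open MeasureTheory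

noncomputable def hermiteEnergy (lam : ℝ) (h h' : ℝ → ℝ) (x : ℝ) : ℝ :=
  h' x ^ 2 + (lam - x ^ 2) * h x ^ 2

theorem integral_sq_sub_sq_sq (s : ℝ) :
    ∫ x in (-s)..s, (s ^ 2 - x ^ 2) ^ 2 = 16 / 15 * s ^ 5 := by
  have hexpand : ∀ x : ℝ, (s ^ 2 - x ^ 2) ^ 2 = (s ^ 2) ^ 2 - 2 * s ^ 2 * x ^ 2 + x ^ 4 :=
    fun x => by ring
  simp only [hexpand]
  rw [intervalIntegral.integral_add, intervalIntegral.integral_sub,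
    intervalIntegral.integral_const_mul, integral_pow, integral_pow, intervalIntegral.integral_const]
  · simp only [sub_neg_eq_add, smul_eq_mul, Nat.reduceAdd, Nat.cast_ofNat]
    ring
  all_goals exact (by fun_prop : Continuous _).intervalIntegrable _ _

theorem intervalIntegral_mul_le_mul_integral {f g : ℝ → ℝ} {a b K : ℝ} (hab : a ≤ b)
    (hf : Continuous f) (hg : Continuous g) (hfi : Integrable f) (hf0 : ∀ x, 0 ≤ f x)
    (hK : 0 ≤ K) (hgK : ∀ x ∈ Set.Icc a b, g x ≤ K) :
    ∫ x in a..b, f x * g x ≤ K * ∫ x, f x := by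
  calc ∫ x in a..b, f x * g x ≤ ∫ x in a..b, K * f x :=
        intervalIntegral.integral_mono_on hab ((by fun_prop : Continuous _).intervalIntegrable _ _)
          ((by fun_prop : Continuous _).intervalIntegrable _ _) fun x hx => by
            rw [mul_comm]; exact mul_le_mul_of_nonneg_right (hgK x hx) (hf0 x)
    _ = K * ∫ x in a..b, f x := intervalIntegral.integral_const_mul _ _
    _ ≤ K * ∫ x, f x := by
        gcongr ?_ * ?_
        rw [intervalIntegral.integral_of_le hab]
        exact setIntegral_le_integral hfi (.of_forall hf0)

section HermiteEquation

variable {lam : ℝ} {h h' h'' : ℝ → ℝ}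
  (hd : ∀ x, HasDerivAt h (h' x) x) (hd' : ∀ x, HasDerivAt h' (h'' x) x)
  (hode : ∀ x, -h'' x + x ^ 2 * h x = lam * h x)
include hd hd' hode

theorem hasDerivAt_hermiteEnergy (x : ℝ) :
    HasDerivAt (hermiteEnergy lam h h') (-2 * x * h x ^ 2) x := by
  refine (((hd' x).fun_pow 2).add
    (((hasDerivAt_pow 2 x).const_sub lam).mul ((hd x).fun_pow 2))).congr_deriv ?_
  rw [show h'' x = (x ^ 2 - lam) * h x by linarith [hode x]]
  push_cast
  ring

theorem abs_hermiteEnergy_sub_le (hInt : Integrable fun x => h x ^ 2) (y : ℝ) :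
    |hermiteEnergy lam h h' y - hermiteEnergy lam h h' 0| ≤ 2 * |y| * ∫ x, h x ^ 2 := by
  have hh : Continuous h := continuous_iff_continuousAt.2 fun x => (hd x).continuousAt
  have hFTC : ∫ t in (0 : ℝ)..y, -2 * t * h t ^ 2 =
      hermiteEnergy lam h h' y - hermiteEnergy lam h h' 0 :=
    intervalIntegral.integral_eq_sub_of_hasDerivAt
      (fun t _ => hasDerivAt_hermiteEnergy hd hd' hode t)
      ((by fun_prop : Continuous fun t => -2 * t * h t ^ 2).intervalIntegrable _ _)
  have hbound : ∀ᵐ t ∂volume.restrict (Set.uIoc 0 y),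
      ‖-2 * t * h t ^ 2‖ ≤ 2 * |y| * h t ^ 2 := by
    refine (ae_restrict_mem measurableSet_uIoc).mono fun t ht => ?_
    have ht_le : |t| ≤ |y| := by
      rw [abs_le]
      rcases Set.mem_uIoc.1 ht with ⟨h0, h1⟩ | ⟨h0, h1⟩ <;> cases abs_cases y <;>
        constructor <;> linarith
    rw [Real.norm_eq_abs, abs_mul, abs_mul, abs_neg, abs_two, abs_of_nonneg (sq_nonneg (h t))]
    gcongr
  calc |hermiteEnergy lam h h' y - hermiteEnergy lam h h' 0|
      = ‖∫ t in Set.uIoc 0 y, -2 * t * h t ^ 2‖ := by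
        rw [← hFTC, ← intervalIntegral.norm_integral_eq_norm_integral_uIoc, Real.norm_eq_abs]
    _ ≤ ∫ t in Set.uIoc 0 y, 2 * |y| * h t ^ 2 :=
        norm_integral_le_of_norm_le (hInt.const_mul _).integrableOn hbound
    _ ≤ ∫ t, 2 * |y| * h t ^ 2 :=
        setIntegral_le_integral (hInt.const_mul _) (.of_forall fun t => by positivity)
    _ = 2 * |y| * ∫ x, h x ^ 2 := integral_const_mul _ _

theorem integral_hermiteEnergy_mul_eq {φ φ' φ'' : ℝ → ℝ} {a b : ℝ}
    (hφ : ∀ x, HasDerivAt φ (φ' x) x) (hφ' : ∀ x, HasDerivAt φ' (φ'' x) x)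
    (hφ'' : Continuous φ'') (ha : φ a = 0) (ha' : φ' a = 0) (hb : φ b = 0) (hb' : φ' b = 0) :
    ∫ x in a..b, hermiteEnergy lam h h' x * φ x =
      ∫ x in a..b, h x ^ 2 * (φ'' x / 2 + 2 * (lam - x ^ 2) * φ x) := by
  have hh : Continuous h := continuous_iff_continuousAt.2 fun x => (hd x).continuousAt
  have hh' : Continuous h' := continuous_iff_continuousAt.2 fun x => (hd' x).continuousAt
  have hcφ : Continuous φ := continuous_iff_continuousAt.2 fun x => (hφ x).continuousAt
  have hG : ∀ x, HasDerivAt (fun y => h y * h' y * φ y - h y ^ 2 * φ' y / 2)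
      (hermiteEnergy lam h h' x * φ x - h x ^ 2 * (φ'' x / 2 + 2 * (lam - x ^ 2) * φ x)) x := by
    intro x
    refine ((((hd x).mul (hd' x)).mul (hφ x)).sub
      ((((hd x).fun_pow 2).mul (hφ' x)).div_const 2)).congr_deriv ?_
    rw [hermiteEnergy, show h'' x = (x ^ 2 - lam) * h x by linarith [hode x]]
    push_cast
    simp only [Pi.mul_apply]
    ring
  have hEφ : Continuous fun x => hermiteEnergy lam h h' x * φ x := by
    unfold hermiteEnergy; fun_prop
  have hweight : Continuous fun x => h x ^ 2 * (φ'' x / 2 + 2 * (lam - x ^ 2) * φ x) := by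
    fun_prop
  have hFTC := intervalIntegral.integral_eq_sub_of_hasDerivAt (fun x _ => hG x)
    ((hEφ.sub hweight).intervalIntegrable a b)
  rw [intervalIntegral.integral_sub (hEφ.intervalIntegrable a b) (hweight.intervalIntegrable a b),
    ha, ha', hb, hb'] at hFTC
  linarith

theorem hermiteEnergy_zero_le (hlam : 1 ≤ lam) (hInt : Integrable fun x => h x ^ 2) :
    hermiteEnergy lam h h' 0 ≤ 8 * √lam * ∫ x, h x ^ 2 := by
  have hh : Continuous h := continuous_iff_continuousAt.2 fun x => (hd x).continuousAt
  have hh' : Continuous h' := continuous_iff_continuousAt.2 fun x => (hd' x).continuousAt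
  set s := √lam
  set m := ∫ x, h x ^ 2
  set E0 := hermiteEnergy lam h h' 0
  have hs1 : 1 ≤ s := Real.one_le_sqrt.2 hlam
  have hs2 : s ^ 2 = lam := Real.sq_sqrt (by linarith)
  have hm : 0 ≤ m := integral_nonneg fun x => sq_nonneg _
  have hss : -s ≤ s := by linarith
  have hφ : ∀ x, HasDerivAt (fun y => (lam - y ^ 2) ^ 2) (-4 * x * (lam - x ^ 2)) x := fun x =>
    (((hasDerivAt_pow 2 x).const_sub lam).fun_pow 2).congr_deriv (by push_cast; ring)
  have hφ' : ∀ x, HasDerivAt (fun y => -4 * y * (lam - y ^ 2)) (12 * x ^ 2 - 4 * lam) x := fun x =>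
    (((hasDerivAt_id x).const_mul (-4)).mul ((hasDerivAt_pow 2 x).const_sub lam)).congr_deriv
      (by push_cast; simp only [id]; ring)
  have hid := integral_hermiteEnergy_mul_eq hd hd' hode hφ hφ' (by fun_prop) (a := -s) (b := s)
    (by simp [← hs2]) (by simp [← hs2]) (by simp [← hs2]) (by simp [← hs2])
  have hφint : ∫ x in (-s)..s, (lam - x ^ 2) ^ 2 = 16 / 15 * s ^ 5 :=
    hs2 ▸ integral_sq_sub_sq_sq s
  have hlower : (E0 - 2 * s * m) * (16 / 15 * s ^ 5) ≤
      ∫ x in (-s)..s, hermiteEnergy lam h h' x * (lam - x ^ 2) ^ 2 := by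
    rw [← hφint, ← intervalIntegral.integral_const_mul]
    refine intervalIntegral.integral_mono_on hss
      ((by fun_prop : Continuous _).intervalIntegrable _ _)
      ((by unfold hermiteEnergy; fun_prop : Continuous _).intervalIntegrable _ _) fun x hx => ?_
    have hEx := abs_le.1 (abs_hermiteEnergy_sub_le hd hd' hode hInt x)
    have hxs : |x| ≤ s := abs_le.2 hx
    gcongr
    nlinarith
  have hupper : ∫ x in (-s)..s,
      h x ^ 2 * ((12 * x ^ 2 - 4 * lam) / 2 + 2 * (lam - x ^ 2) * (lam - x ^ 2) ^ 2)
        ≤ (4 * lam + 2 * lam ^ 3) * m := by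
    refine intervalIntegral_mul_le_mul_integral hss (by fun_prop) (by fun_prop) hInt
      (fun x => sq_nonneg _) (by positivity) fun x hx => ?_
    have hx2 : x ^ 2 ≤ lam := hs2 ▸ sq_le_sq' hx.1 hx.2
    have hx0 : lam - x ^ 2 ≤ lam := by linarith [sq_nonneg x]
    nlinarith [sq_nonneg x, pow_le_pow_left₀ (by linarith : 0 ≤ lam - x ^ 2) hx0 3]
  have hkey : E0 * s ^ 5 ≤ 8 * s * m * s ^ 5 := by
    have hchain := hlower.trans (hid ▸ hupper)
    rw [← hs2] at hchain
    nlinarith [mul_le_mul_of_nonneg_right (pow_le_pow_right₀ hs1 (by norm_num : 2 ≤ 6)) hm,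
      mul_nonneg (pow_nonneg (by linarith : (0:ℝ) ≤ s) 6) hm]
  exact le_of_mul_le_mul_right hkey (by positivity)

theorem hermiteEnergy_le_of_abs_le (hlam : 1 ≤ lam) (hInt : Integrable fun x => h x ^ 2) {x : ℝ}
    (hx : |x| ≤ √lam / 2) : hermiteEnergy lam h h' x ≤ 9 * √lam * ∫ y, h y ^ 2 := by
  have hzero := hermiteEnergy_zero_le hd hd' hode hlam hInt
  have hvar := abs_le.1 (abs_hermiteEnergy_sub_le hd hd' hode hInt x)
  have hm : 0 ≤ ∫ y, h y ^ 2 := integral_nonneg fun _ => sq_nonneg _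
  nlinarith [mul_le_mul_of_nonneg_right hx hm]

end HermiteEquation

theorem rpow_mul_abs_le_of_sq_le {lam r a c : ℝ} (hlam : 0 < lam) (hc : 0 ≤ c)
    (hsq : lam ^ (2 * r) * a ^ 2 ≤ c ^ 2) : lam ^ r * |a| ≤ c := by
  refine (pow_le_pow_iff_left₀ (by positivity) hc two_ne_zero).1 ?_
  rwa [mul_pow, sq_abs, ← Real.rpow_natCast, ← Real.rpow_mul hlam.le, mul_comm r, Nat.cast_ofNat]

/-- Interior pointwise bounds for 1D Hermite eigenfunctions: if `−h″ + x²h = λh`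
with `λ ∈ 1 + 2ℕ` and `‖h‖_{L²} = 1`, then
`λ^{-1/4}|h′(x)| + λ^{1/4}|h(x)| ≲ 1` for `|x| ≤ λ^{1/2}/2`. -/
theorem stmt_9 :
    ∃ C : ℝ, 0 < C ∧
      ∀ (lam : ℝ) (h h' h'' : ℝ → ℝ),
        (∃ k : ℕ, lam = 1 + 2 * k) →
        (∀ x, HasDerivAt h (h' x) x) →
        (∀ x, HasDerivAt h' (h'' x) x) →
        (∀ x, -h'' x + x^2 * h x = lam * h x) →
        Integrable (fun x => (h x)^2) →
        (∫ x : ℝ, (h x)^2) = 1 →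
        ∀ x : ℝ, |x| ≤ Real.sqrt lam / 2 →
          lam ^ (-(1:ℝ)/4) * |h' x| + lam ^ ((1:ℝ)/4) * |h x| ≤ C := by
  refine ⟨7, by norm_num, ?_⟩
  rintro lam h h' h'' ⟨k, hk⟩ hd hd' hode hInt hnorm x hx
  have hlam : 1 ≤ lam := by rw [hk]; linarith [k.cast_nonneg (α := ℝ)]
  have hs : 0 < √lam := Real.sqrt_pos.2 (by linarith)
  have hE := hermiteEnergy_le_of_abs_le hd hd' hode hlam hInt hx
  rw [hnorm, mul_one, hermiteEnergy] at hE
  have hx2 : x ^ 2 ≤ lam / 4 := by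
    have := pow_le_pow_left₀ (abs_nonneg x) hx 2
    rw [sq_abs, div_pow, Real.sq_sqrt (by linarith)] at this
    linarith
  have hderiv : lam ^ (-(1:ℝ)/4) * |h' x| ≤ 3 := by
    refine rpow_mul_abs_le_of_sq_le (by linarith) (by norm_num) ?_
    rw [show 2 * (-(1:ℝ)/4) = -(1/2) by norm_num, Real.rpow_neg (by linarith),
      ← Real.sqrt_eq_rpow, inv_mul_le_iff₀ hs]
    nlinarith [mul_nonneg (by linarith : 0 ≤ lam - x ^ 2) (sq_nonneg (h x))]
  have hvalue : lam ^ ((1:ℝ)/4) * |h x| ≤ 4 := by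
    refine rpow_mul_abs_le_of_sq_le (by linarith) (by norm_num) ?_
    rw [show 2 * ((1:ℝ)/4) = 1/2 by norm_num, ← Real.sqrt_eq_rpow]
    have hscaled : √lam * (√lam * h x ^ 2) ≤ √lam * 12 := by
      rw [← mul_assoc, ← sq, Real.sq_sqrt (by linarith)]
      nlinarith [sq_nonneg (h' x), sq_nonneg (h x)]
    linarith [le_of_mul_le_mul_left hscaled hs]
  linarith
end

section
/- (Geometry of weights in the unique continuation argument) Let ε ≤ 1/40, τ > 0, and let h : [0,∞) → ℝ be C¹ with h(0)=0 and τ ≤ h′ ≤ (1+ε)τ, and suppose φ satisfies |φ(t,x) − (h(−ln t) − |x|²/(8t))| ≤ ε(τ + |x|²/t). Let (t₀,x₀) with 1/(16τ) ≤ t₀ ≤ 1/(8τ) and |x₀| = 1, and let (t,x) ∈ F^{int}_τ = [1/(32τ), 1/(16τ)]×B(0,1/4). Then φ(t,x) − φ(t₀,x₀) ≥ τ/2. -/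
/-!
Compare the weight with its model `h(−ln t) − |x|²/(8t)` at both points. Since `h' ≥ τ`, the
drop in time from `t₀` to `t ≤ 1/(16τ)` raises `h(−ln t)` by at least `τ ln(t₀/t) ≥ τ − 1/(16 t₀)`,
while the Gaussian term costs at most `τ/4` at `(t, x)` and gains `1/(8 t₀)` at `(t₀, x₀)`.
Together with the errors `3ετ` and `ε(τ + 1/t₀)` the gap is at least
`3τ/4 − 4ετ + (1/16 − ε)/t₀ ≥ 5τ/4 − 12ετ`, which is `≥ τ/2` for `ε ≤ 1/40`.
-/

open Real

lemma mul_one_sub_div_le_sub_comp_neg_log {h h' : ℝ → ℝ} {τ : ℝ} (hτ : 0 ≤ τ)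
    (hder : ∀ s, HasDerivAt h (h' s) s) (hlb : ∀ s, τ ≤ h' s)
    {t t₀ : ℝ} (ht : 0 < t) (htt₀ : t ≤ t₀) :
    τ * (1 - t / t₀) ≤ h (-log t) - h (-log t₀) := by
  have ht₀ : 0 < t₀ := ht.trans_le htt₀
  have hlog : 1 - t / t₀ ≤ log t₀ - log t := by
    simpa [log_div ht₀.ne' ht.ne', inv_div] using one_sub_inv_le_log_of_pos (div_pos ht₀ ht)
  have hdiff : Differentiable ℝ h := fun s => (hder s).differentiableAt
  calc τ * (1 - t / t₀) ≤ τ * (-log t - -log t₀) := by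
        rw [neg_sub_neg]; exact mul_le_mul_of_nonneg_left hlog hτ
    _ ≤ h (-log t) - h (-log t₀) :=
        mul_sub_le_image_sub_of_le_deriv hdiff (fun s => (hder s).deriv ▸ hlb s)
          (by linarith [log_le_log ht htt₀])

section WeightBounds

variable {ε τ H y : ℝ}

lemma sub_le_of_abs_sub_le_of_le_quarter (hε : 0 ≤ ε) (hτ : 0 < τ) {t r : ℝ}
    (ht : 1 / (32 * τ) ≤ t) (hr₀ : 0 ≤ r) (hr : r ≤ 1 / 4)
    (hy : |y - (H - r ^ 2 / (8 * t))| ≤ ε * (τ + r ^ 2 / t)) :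
    H - τ / 4 - 3 * (ε * τ) ≤ y := by
  have ht₀ : 0 < t := lt_of_lt_of_le (by positivity) ht
  have hrt : r ^ 2 / t ≤ 2 * τ := by
    rw [div_le_iff₀ (by positivity)] at ht
    rw [div_le_iff₀ ht₀]
    nlinarith
  have herr : ε * (r ^ 2 / t) ≤ ε * (2 * τ) := mul_le_mul_of_nonneg_left hrt hε
  have hsplit : r ^ 2 / (8 * t) = r ^ 2 / t / 8 := by ring
  rw [hsplit] at hy
  linarith [(abs_le.mp hy).1]

lemma le_sub_of_abs_sub_le_of_eq_one {t r : ℝ} (hr : r = 1)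
    (hy : |y - (H - r ^ 2 / (8 * t))| ≤ ε * (τ + r ^ 2 / t)) :
    y ≤ H - (1 / 8 - ε) * t⁻¹ + ε * τ := by
  have hsplit : (1 : ℝ) ^ 2 / (8 * t) = t⁻¹ / 8 ∧ (1 : ℝ) ^ 2 / t = t⁻¹ := by
    constructor <;> ring
  rw [hr, hsplit.1, hsplit.2] at hy
  linarith [(abs_le.mp hy).2]

end WeightBounds

theorem stmt_17_general {n : ℕ} (ε τ : ℝ) (hε0 : 0 ≤ ε) (hε : ε ≤ 1/40) (hτ : 0 < τ)
    (h h' : ℝ → ℝ)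
    (hder : ∀ s, HasDerivAt h (h' s) s)
    (hlb : ∀ s, τ ≤ h' s)
    (φ : ℝ → EuclideanSpace ℝ (Fin n) → ℝ)
    (hφ : ∀ (t : ℝ) (x : EuclideanSpace ℝ (Fin n)), 0 < t →
      |φ t x - (h (-Real.log t) - ‖x‖^2 / (8 * t))| ≤ ε * (τ + ‖x‖^2 / t))
    (t₀ t : ℝ) (x₀ x : EuclideanSpace ℝ (Fin n))
    (ht₀ : 1/(16 * τ) ≤ t₀) (ht₀' : t₀ ≤ 1/(8 * τ)) (hx₀ : ‖x₀‖ = 1)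
    (ht : 1/(32 * τ) ≤ t) (ht' : t ≤ 1/(16 * τ)) (hx : ‖x‖ ≤ 1/4) :
    τ/2 ≤ φ t x - φ t₀ x₀ := by
  have htpos : 0 < t := lt_of_lt_of_le (by positivity) ht
  have ht₀pos : 0 < t₀ := lt_of_lt_of_le (by positivity) ht₀
  have hinner := sub_le_of_abs_sub_le_of_le_quarter hε0 hτ ht (norm_nonneg x) hx (hφ t x htpos)
  have houter := le_sub_of_abs_sub_le_of_eq_one hx₀ (hφ t₀ x₀ ht₀pos)
  have hgain := mul_one_sub_div_le_sub_comp_neg_log hτ.le hder hlb htpos (ht'.trans ht₀)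
  have hτt : τ * (t / t₀) ≤ t₀⁻¹ / 16 := by
    rw [le_div_iff₀ (by positivity)] at ht'
    rw [div_eq_mul_inv, ← mul_assoc]
    nlinarith [inv_pos.mpr ht₀pos]
  have ht₀inv : 8 * τ ≤ t₀⁻¹ := by
    rw [le_inv_comm₀ (by positivity) ht₀pos, ← one_div]; exact ht₀'
  have hε_τ : ε * τ ≤ 1 / 40 * τ := mul_le_mul_of_nonneg_right hε hτ.le
  have hεt₀ : (1 / 16 - ε) * (8 * τ) ≤ (1 / 16 - ε) * t₀⁻¹ :=
    mul_le_mul_of_nonneg_left ht₀inv (by linarith)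
  linarith

/-- Geometry of weights in the unique continuation argument: with `ε ≤ 1/40`,
`τ ≤ h′ ≤ (1+ε)τ`, `h(0)=0`, and
`|φ(t,x) − (h(−ln t) − |x|²/(8t))| ≤ ε(τ + |x|²/t)`, for `(t₀,x₀)` with
`1/(16τ) ≤ t₀ ≤ 1/(8τ)`, `|x₀| = 1`, and `(t,x) ∈ [1/(32τ),1/(16τ)]×B(0,1/4)`,
one has `φ(t,x) − φ(t₀,x₀) ≥ τ/2`. -/
theorem stmt_17 {n : ℕ} (ε τ : ℝ) (hε0 : 0 ≤ ε) (hε : ε ≤ 1/40) (hτ : 0 < τ)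
    (h h' : ℝ → ℝ) (hh0 : h 0 = 0)
    (hder : ∀ s, HasDerivAt h (h' s) s)
    (hlb : ∀ s, τ ≤ h' s) (hub : ∀ s, h' s ≤ (1 + ε) * τ)
    (φ : ℝ → EuclideanSpace ℝ (Fin n) → ℝ)
    (hφ : ∀ (t : ℝ) (x : EuclideanSpace ℝ (Fin n)), 0 < t →
      |φ t x - (h (-Real.log t) - ‖x‖^2 / (8 * t))| ≤ ε * (τ + ‖x‖^2 / t))
    (t₀ t : ℝ) (x₀ x : EuclideanSpace ℝ (Fin n))
    (ht₀ : 1/(16 * τ) ≤ t₀) (ht₀' : t₀ ≤ 1/(8 * τ)) (hx₀ : ‖x₀‖ = 1)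
    (ht : 1/(32 * τ) ≤ t) (ht' : t ≤ 1/(16 * τ)) (hx : ‖x‖ ≤ 1/4) :
    τ/2 ≤ φ t x - φ t₀ x₀ :=
  stmt_17_general ε τ hε0 hε hτ h h' hder hlb φ hφ t₀ t x₀ x ht₀ ht₀' hx₀ ht ht' hx
end
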